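/- Let g be any bijection of (0, π/2) onto itself with g(π/4) = 7π/16, and define the labeling family f_P = E g for P = (1,1) and f_P = identity on (0, π) for all other points P ∈ ℝ². Consider the triangles A' = (0,1), B' = (0,0), C' = (1,1) and A = (1,2), B = (1,1), C = (2,2). Then dist(A', B') = dist(A, B), dist(A', C') = dist(A, C), and f_{A'}(∠ B' A' C') = f_A(∠ B A C) (both included angles equal π/2 and receive label π/2), but f_{B'}(∠ A' B' C') ≠ f_B(∠ A B C) (the angle at B' = (0,0) has measure π/4 labeled π/4, while the angle at B = (1,1) has measure π/4 labeled 7π/16). Hence the SAS congruence axiom fails for the relabeled angle congruence. -/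

import Mathlib

/-! The triangle `A B C` is the translate of `A' B' C'` by `(1, 1)`, so their sides and angles
agree; both are right isosceles, with base angle `π / 4`. Every vertex except `B = (1, 1)` is
labelled by the identity, so only the base angle at `B` is relabelled, to
`g (π / 4) = 7π / 16 ≠ π / 4`. -/

open Real Set EuclideanGeometry

noncomputable def extendLabel (g : ℝ → ℝ) (x : ℝ) : ℝ :=
  if x < π / 2 then g x
  else if x = π / 2 then π / 2
  else π - g (π - x)

noncomputable def pt (a b : ℝ) : EuclideanSpace ℝ (Fin 2) := WithLp.toLp 2 ![a, b]

noncomputable def labelFam (g : ℝ → ℝ) (P : EuclideanSpace ℝ (Fin 2)) : ℝ → ℝ :=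
  open scoped Classical in
  if P = pt 1 1 then extendLabel g else id

theorem EuclideanGeometry.angle_eq_pi_div_four_of_angle_eq_pi_div_two_of_dist_eq
    {V P : Type*} [NormedAddCommGroup V] [InnerProductSpace ℝ V] [MetricSpace P]
    [NormedAddTorsor V P] {a b c : P} (hright : ∠ b a c = π / 2) (hiso : dist a b = dist a c)
    (hne : b ≠ a) : ∠ a b c = π / 4 := by
  have hbase : ∠ a b c = ∠ a c b := angle_eq_angle_of_dist_eq hiso
  have hsum := angle_add_angle_add_angle_eq_pi c hne
  rw [angle_comm b c a, angle_comm c a b] at hsum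
  linarith

theorem pt_eq_pt_iff {a b c d : ℝ} : pt a b = pt c d ↔ a = c ∧ b = d := by
  simp [pt]

theorem pt_add_pt (a b c d : ℝ) : pt a b + pt c d = pt (a + c) (b + d) := by
  ext i; fin_cases i <;> simp [pt]

theorem pt_sub_pt (a b c d : ℝ) : pt a b - pt c d = pt (a - c) (b - d) := by
  ext i; fin_cases i <;> simp [pt]

theorem inner_pt_pt (a b c d : ℝ) : inner ℝ (pt a b) (pt c d) = a * c + b * d := by
  simp [pt, PiLp.inner_apply, Fin.sum_univ_two, mul_comm]

theorem dist_pt_pt (a b c d : ℝ) : dist (pt a b) (pt c d) = √((a - c) ^ 2 + (b - d) ^ 2) := by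
  simp [pt, EuclideanSpace.dist_eq, Fin.sum_univ_two, Real.dist_eq]

theorem angle_pt_eq_pi_div_two_iff (a b c d e f : ℝ) :
    ∠ (pt a b) (pt c d) (pt e f) = π / 2 ↔ (a - c) * (e - c) + (b - d) * (f - d) = 0 := by
  rw [angle, ← InnerProductGeometry.inner_eq_zero_iff_angle_eq_pi_div_two, vsub_eq_sub,
    vsub_eq_sub, pt_sub_pt, pt_sub_pt, inner_pt_pt]

theorem extendLabel_of_lt (g : ℝ → ℝ) {x : ℝ} (hx : x < π / 2) : extendLabel g x = g x :=
  if_pos hx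

theorem labelFam_pt_one_one (g : ℝ → ℝ) : labelFam g (pt 1 1) = extendLabel g :=
  if_pos rfl

theorem labelFam_pt_of_ne (g : ℝ → ℝ) {a b : ℝ} (h : a ≠ 1 ∨ b ≠ 1) :
    labelFam g (pt a b) = id :=
  if_neg fun he => by rw [pt_eq_pt_iff] at he; tauto

theorem sas_fails_general (g : ℝ → ℝ)
    (hv : g (π / 4) = 7 * π / 16) :
    dist (pt 0 1) (pt 0 0) = dist (pt 1 2) (pt 1 1) ∧
    dist (pt 0 1) (pt 1 1) = dist (pt 1 2) (pt 2 2) ∧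
    ∠ (pt 0 0) (pt 0 1) (pt 1 1) = π / 2 ∧
    ∠ (pt 1 1) (pt 1 2) (pt 2 2) = π / 2 ∧
    labelFam g (pt 0 1) (∠ (pt 0 0) (pt 0 1) (pt 1 1)) = π / 2 ∧
    labelFam g (pt 1 2) (∠ (pt 1 1) (pt 1 2) (pt 2 2)) = π / 2 ∧
    labelFam g (pt 0 1) (∠ (pt 0 0) (pt 0 1) (pt 1 1)) =
      labelFam g (pt 1 2) (∠ (pt 1 1) (pt 1 2) (pt 2 2)) ∧
    ∠ (pt 0 1) (pt 0 0) (pt 1 1) = π / 4 ∧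
    labelFam g (pt 0 0) (∠ (pt 0 1) (pt 0 0) (pt 1 1)) = π / 4 ∧
    ∠ (pt 1 2) (pt 1 1) (pt 2 2) = π / 4 ∧
    labelFam g (pt 1 1) (∠ (pt 1 2) (pt 1 1) (pt 2 2)) = 7 * π / 16 ∧
    labelFam g (pt 0 0) (∠ (pt 0 1) (pt 0 0) (pt 1 1)) ≠
      labelFam g (pt 1 1) (∠ (pt 1 2) (pt 1 1) (pt 2 2)) := by
  have hlegs : dist (pt 0 1) (pt 0 0) = dist (pt 0 1) (pt 1 1) := by
    simp only [dist_pt_pt]; norm_num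
  have hright : ∠ (pt 0 0) (pt 0 1) (pt 1 1) = π / 2 := by
    rw [angle_pt_eq_pi_div_two_iff]; norm_num
  have hbase : ∠ (pt 0 1) (pt 0 0) (pt 1 1) = π / 4 :=
    angle_eq_pi_div_four_of_angle_eq_pi_div_two_of_dist_eq hright hlegs
      (by rw [Ne, pt_eq_pt_iff]; norm_num)
  obtain ⟨hA, hB, hC⟩ :
      pt 0 1 + pt 1 1 = pt 1 2 ∧ pt 0 0 + pt 1 1 = pt 1 1 ∧ pt 1 1 + pt 1 1 = pt 2 2 := by
    simp only [pt_add_pt]; norm_num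
  have hAB := dist_add_right (pt 0 1) (pt 0 0) (pt 1 1)
  have hAC := dist_add_right (pt 0 1) (pt 1 1) (pt 1 1)
  have hright' := angle_add_const (pt 0 0) (pt 0 1) (pt 1 1) (pt 1 1)
  have hbase' := angle_add_const (pt 0 1) (pt 0 0) (pt 1 1) (pt 1 1)
  rw [hA, hB] at hAB
  rw [hA, hC] at hAC
  rw [hB, hA, hC, hright] at hright'
  rw [hA, hB, hC, hbase] at hbase'
  have hlabel : extendLabel g (π / 4) = 7 * π / 16 :=
    (extendLabel_of_lt g (by linarith [pi_pos])).trans hv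
  simp only [labelFam_pt_of_ne g (a := 0) (b := 1) (by norm_num),
    labelFam_pt_of_ne g (a := 1) (b := 2) (by norm_num),
    labelFam_pt_of_ne g (a := 0) (b := 0) (by norm_num), labelFam_pt_one_one,
    hAB, hAC, hright, hright', hbase, hbase', hlabel, id, true_and]
  intro h
  linarith [pi_pos]

/-- With `g` a bijection of `(0, π/2)` with `g (π/4) = 7π/16`, labeling `f_P = E g` at
`P = (1,1)` and the identity elsewhere, the triangles `A' = (0,1), B' = (0,0), C' = (1,1)`
and `A = (1,2), B = (1,1), C = (2,2)` satisfy SAS-equality of two sides and the labeled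
included angle (both included angles are `π/2` with label `π/2`), but the labeled angles
at `B'` and `B` differ (measure `π/4` labeled `π/4` vs. measure `π/4` labeled `7π/16`).
Hence SAS fails for the relabeled angle congruence. -/
theorem sas_fails (g : ℝ → ℝ)
    (hg : Set.BijOn g (Ioo 0 (π / 2)) (Ioo 0 (π / 2)))
    (hv : g (π / 4) = 7 * π / 16) :
    dist (pt 0 1) (pt 0 0) = dist (pt 1 2) (pt 1 1) ∧
    dist (pt 0 1) (pt 1 1) = dist (pt 1 2) (pt 2 2) ∧
    ∠ (pt 0 0) (pt 0 1) (pt 1 1) = π / 2 ∧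
    ∠ (pt 1 1) (pt 1 2) (pt 2 2) = π / 2 ∧
    labelFam g (pt 0 1) (∠ (pt 0 0) (pt 0 1) (pt 1 1)) = π / 2 ∧
    labelFam g (pt 1 2) (∠ (pt 1 1) (pt 1 2) (pt 2 2)) = π / 2 ∧
    labelFam g (pt 0 1) (∠ (pt 0 0) (pt 0 1) (pt 1 1)) =
      labelFam g (pt 1 2) (∠ (pt 1 1) (pt 1 2) (pt 2 2)) ∧
    ∠ (pt 0 1) (pt 0 0) (pt 1 1) = π / 4 ∧
    labelFam g (pt 0 0) (∠ (pt 0 1) (pt 0 0) (pt 1 1)) = π / 4 ∧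
    ∠ (pt 1 2) (pt 1 1) (pt 2 2) = π / 4 ∧
    labelFam g (pt 1 1) (∠ (pt 1 2) (pt 1 1) (pt 2 2)) = 7 * π / 16 ∧
    labelFam g (pt 0 0) (∠ (pt 0 1) (pt 0 0) (pt 1 1)) ≠
      labelFam g (pt 1 1) (∠ (pt 1 2) (pt 1 1) (pt 2 2)) :=
  sas_fails_general g hv
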